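/- Let θ be irrational with irrationality exponent w(θ) and let 0 < τ < 1/w(θ). Then for every real y, for all sufficiently large Q there exists an integer 1 ≤ n ≤ Q with ‖nθ − y‖ < Q^{−τ}; i.e., the uniform approximation set U_τ[θ] is all of T. -/

import Mathlib

open Filter

/-- distance from `x` to the nearest integer -/
noncomputable def nint (x : ℝ) : ℝ := ⨅ m : ℤ, |x - (m : ℝ)|

/-- denominators of the continued fraction convergents of `θ` (`qd θ 0 = 1`) -/
noncomputable def qd (θ : ℝ) (n : ℕ) : ℝ := (GenContFract.of θ).dens n

/-- the `(n+1)`-st partial quotient `a_{n+1}` of `θ` is `partQuot θ n` -/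
noncomputable def partQuot (θ : ℝ) (n : ℕ) : Option ℝ := (GenContFract.of θ).partDens.get? n

/-- irrationality exponent `w(θ) = sup{ s > 0 : liminf_j j^s ‖jθ‖ = 0 }`, as an extended real -/
noncomputable def irrExp (θ : ℝ) : EReal :=
  sSup {w : EReal | ∃ s : ℝ, w = (s : EReal) ∧ 0 < s ∧
    Filter.atTop.liminf (fun j : ℕ => (j : ℝ) ^ s * nint (j * θ)) = 0}

/-- `G_n = ⋃_{i=1}^n B(iθ, n^{-τ})` in the circle `T = ℝ/ℤ` -/
noncomputable def Gset (θ τ : ℝ) (n : ℕ) : Set (AddCircle (1 : ℝ)) :=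
  ⋃ i ∈ Finset.Icc 1 n, Metric.ball (((i : ℝ) * θ : ℝ) : AddCircle (1 : ℝ)) ((n : ℝ) ^ (-τ))

/-- `F_k = ⋂_{n=q_k+1}^{q_{k+1}} G_n` -/
noncomputable def Fset (θ τ : ℝ) (k : ℕ) : Set (AddCircle (1 : ℝ)) :=
  ⋂ n ∈ {n : ℕ | qd θ k < (n : ℝ) ∧ (n : ℝ) ≤ qd θ (k + 1)}, Gset θ τ n

/-- the Dirichlet uniform approximation set `U_τ[θ] ⊆ T` -/
noncomputable def Uset (θ τ : ℝ) : Set (AddCircle (1 : ℝ)) :=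
  {y | ∀ᶠ Q : ℕ in atTop, ∃ n : ℕ, 1 ≤ n ∧ n ≤ Q ∧
    dist (((n : ℝ) * θ : ℝ) : AddCircle (1 : ℝ)) y < (Q : ℝ) ^ (-τ)}

/-!
Since `τ w(θ) < 1`, there are `s > 0` with `τ s < 1` and `c > 0` with `‖jθ‖ ≥ c j^{-s}` for all
`j ≥ 1`. For large `Q`, let `q` minimise `‖nθ‖` over `1 ≤ n ≤ Q/2` and `a` minimise it over
`1 ≤ n < q`. Dirichlet's theorem gives `‖qθ‖ < 2/Q`, so the Diophantine bound forces `q > Q^τ`,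
and then `‖aθ‖ ≤ 1/q < Q^{-τ}`. Minimality of `a` puts `aθ` and `qθ` on opposite sides of
their nearest integers, and two steps of opposite signs and size at most `δ` make
`{nθ : 1 ≤ n ≤ a + q}` `δ`-dense in the circle: from the orbit point closest to `y` from
below, stepping by `+q` or `-a` would get strictly closer.
-/

theorem nint_eq_abs_sub_round (x : ℝ) : nint x = |x - round x| :=
  le_antisymm (ciInf_le ⟨0, by rintro _ ⟨m, rfl⟩; exact abs_nonneg _⟩ (round x))
    (le_ciInf (round_le x))

theorem nint_nonneg (x : ℝ) : 0 ≤ nint x :=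
  nint_eq_abs_sub_round x ▸ abs_nonneg _

theorem nint_le_abs_sub_intCast (x : ℝ) (m : ℤ) : nint x ≤ |x - m| :=
  nint_eq_abs_sub_round x ▸ round_le x m

theorem Irrational.nint_pos {x : ℝ} (hx : Irrational x) : 0 < nint x := by
  rw [nint_eq_abs_sub_round]
  exact abs_pos.mpr (sub_ne_zero.mpr (hx.ne_int _))

theorem fract_add_eq_of_lt {x e : ℝ} (h0 : 0 ≤ Int.fract x + e) (h1 : Int.fract x + e < 1) :
    Int.fract (x + e) = Int.fract x + e :=
  Int.fract_eq_iff.2 ⟨h0, h1, ⌊x⌋, by rw [← Int.self_sub_fract]; ring⟩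

theorem exists_fract_sub_mul_le {θ δ : ℝ} {q q' : ℕ} {p p' : ℤ} (hq : 1 ≤ q) (hq' : 1 ≤ q')
    (hpos : 0 < q * θ - p) (hposδ : q * θ - p ≤ δ)
    (hneg : q' * θ - p' < 0) (hnegδ : -δ ≤ q' * θ - p') (y : ℝ) :
    ∃ n ∈ Finset.Icc 1 (q + q'), Int.fract (y - n * θ) ≤ δ := by
  by_contra! hfar
  set f : ℕ → ℝ := fun n => Int.fract (y - n * θ) with hf
  obtain ⟨n₀, hn₀, hmin⟩ :=
    (Finset.Icc 1 (q + q')).exists_min_image f ⟨1, Finset.mem_Icc.2 ⟨le_rfl, by omega⟩⟩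
  have hδ : δ < f n₀ := hfar n₀ hn₀
  have hlt : f n₀ < 1 := Int.fract_lt_one _
  rw [Finset.mem_Icc] at hn₀
  rcases le_or_gt n₀ q' with h | h
  · have hstep : f (n₀ + q) = f n₀ - (q * θ - p) := by
      have : y - ((n₀ + q : ℕ) : ℝ) * θ = y - n₀ * θ + -(q * θ - p) - p := by push_cast; ring
      simp only [hf]
      rw [this, Int.fract_sub_intCast, fract_add_eq_of_lt (by linarith) (by linarith)]
      ring
    linarith [hmin (n₀ + q) (Finset.mem_Icc.2 ⟨by omega, by omega⟩)]
  · have hstep : f (n₀ - q') = f n₀ + (q' * θ - p') := by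
      have : y - ((n₀ - q' : ℕ) : ℝ) * θ = y - n₀ * θ + (q' * θ - p') + p' := by
        push_cast [h.le]; ring
      simp only [hf]
      rw [this, Int.fract_add_intCast, fract_add_eq_of_lt (by linarith) (by linarith)]
    linarith [hmin (n₀ - q') (Finset.mem_Icc.2 ⟨by omega, by omega⟩)]

theorem dist_coe_le_fract (u v : ℝ) :
    dist (u : AddCircle (1 : ℝ)) (v : AddCircle (1 : ℝ)) ≤ Int.fract (v - u) := by
  rw [dist_eq_norm, ← AddCircle.coe_sub, UnitAddCircle.norm_eq]
  refine (round_le _ (-⌊v - u⌋)).trans_eq ?_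
  rw [← abs_of_nonneg (Int.fract_nonneg (v - u)), ← abs_neg, Int.fract]
  congr 1
  push_cast
  ring

theorem exists_dist_coe_mul_le_of_mul_neg {θ δ : ℝ} {a b : ℕ} (ha : 1 ≤ a) (hb : 1 ≤ b)
    (hsign : (a * θ - round (a * θ)) * (b * θ - round (b * θ)) < 0)
    (haδ : nint (a * θ) ≤ δ) (hbδ : nint (b * θ) ≤ δ) (y : AddCircle (1 : ℝ)) :
    ∃ n ∈ Finset.Icc 1 (a + b), dist ((n * θ : ℝ) : AddCircle (1 : ℝ)) y ≤ δ := by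
  obtain ⟨y, rfl⟩ := QuotientAddGroup.mk_surjective y
  rw [nint_eq_abs_sub_round, abs_le] at haδ hbδ
  suffices ∃ n ∈ Finset.Icc 1 (a + b), Int.fract (y - n * θ) ≤ δ from
    let ⟨n, hn, hδ⟩ := this; ⟨n, hn, (dist_coe_le_fract _ _).trans hδ⟩
  rcases lt_or_gt_of_ne (left_ne_zero_of_mul hsign.ne) with ha0 | ha0
  · rw [add_comm]
    exact exists_fract_sub_mul_le hb ha (pos_of_mul_neg_right hsign ha0.le) hbδ.2 ha0 haδ.1 y
  · exact exists_fract_sub_mul_le ha hb ha0 haδ.2 (neg_of_mul_neg_right hsign ha0.le) hbδ.1 y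

theorem exists_best_approx (θ : ℝ) {N : ℕ} (hN : 1 ≤ N) :
    ∃ q ∈ Finset.Icc 1 N, (∀ n ∈ Finset.Icc 1 N, nint (q * θ) ≤ nint (n * θ)) ∧
      nint (q * θ) ≤ 1 / (N + 1) := by
  obtain ⟨q, hq, hmin⟩ := (Finset.Icc 1 N).exists_min_image (fun n : ℕ => nint (n * θ))
    ⟨1, Finset.mem_Icc.2 ⟨le_rfl, hN⟩⟩
  obtain ⟨k, hk0, hkN, hk⟩ := Real.exists_nat_abs_mul_sub_round_le θ hN
  exact ⟨q, hq, hmin, (hmin k (Finset.mem_Icc.2 ⟨hk0, hkN⟩)).trans (nint_eq_abs_sub_round _ ▸ hk)⟩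

theorem abs_sub_lt_abs_of_mul_nonneg {e e' : ℝ} (he : e ≠ 0) (hle : |e| ≤ |e'|)
    (hsame : 0 ≤ e' * e) : |e - e'| < |e'| := by
  rw [← sq_le_sq] at hle
  rw [← sq_lt_sq]
  nlinarith [sq_pos_of_ne_zero he, sq_nonneg (e' * e - e ^ 2), sq_nonneg (e' - e)]

-- If the two errors had the same sign, `q - a` would approximate better than `a`.
theorem mul_neg_of_best_approx {θ : ℝ} {a q : ℕ} (ha : a ∈ Finset.Icc 1 (q - 1))
    (hmin : ∀ n ∈ Finset.Icc 1 (q - 1), nint (a * θ) ≤ nint (n * θ))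
    (hqa : nint (q * θ) ≤ nint (a * θ)) (hq : 0 < nint (q * θ)) :
    (a * θ - round (a * θ)) * (q * θ - round (q * θ)) < 0 := by
  rw [Finset.mem_Icc] at ha
  rw [nint_eq_abs_sub_round, nint_eq_abs_sub_round] at hqa
  rw [nint_eq_abs_sub_round] at hq
  by_contra! hsame
  have hdiff : nint ((q - a : ℕ) * θ) ≤ |(q * θ - round (q * θ)) - (a * θ - round (a * θ))| := by
    refine (nint_le_abs_sub_intCast _ (round (q * θ) - round (a * θ))).trans_eq ?_
    push_cast [show a ≤ q by omega]
    ring_nf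
  have hlt := abs_sub_lt_abs_of_mul_nonneg (abs_pos.1 hq) hqa hsame
  have := hmin (q - a) (Finset.mem_Icc.2 ⟨by omega, by omega⟩)
  rw [nint_eq_abs_sub_round (a * θ)] at this
  linarith

-- No boundedness assumption is needed: `liminf` in `ℝ` is the junk value `0` when `f` is unbounded.
theorem exists_pos_eventually_le_of_liminf_ne_zero {f : ℕ → ℝ} (hf : ∀ j, 0 ≤ f j)
    (h : atTop.liminf f ≠ 0) : ∃ c > 0, ∀ᶠ j in atTop, c ≤ f j := by
  by_contra! hsmall
  refine h ((liminf_eq (f := atTop) (u := f)).trans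
    (IsGreatest.csSup_eq ⟨Eventually.of_forall hf, fun a ha => ?_⟩))
  by_contra! hpos
  exact hsmall a hpos (ha.mono fun _ => not_lt.2)

theorem Irrational.exists_pos_mul_rpow_neg_le_nint {θ : ℝ} (hθ : Irrational θ) {s : ℝ}
    (h : atTop.liminf (fun j : ℕ => (j : ℝ) ^ s * nint (j * θ)) ≠ 0) :
    ∃ c > 0, ∀ j : ℕ, 1 ≤ j → c * (j : ℝ) ^ (-s) ≤ nint (j * θ) := by
  set g : ℕ → ℝ := fun j => (j : ℝ) ^ s * nint (j * θ)
  have hg : ∀ j, 1 ≤ j → 0 < g j := fun j hj =>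
    mul_pos (Real.rpow_pos_of_pos (by exact_mod_cast hj) s) (hθ.natCast_mul (by omega)).nint_pos
  obtain ⟨c, hc, hev⟩ := exists_pos_eventually_le_of_liminf_ne_zero
    (fun j => mul_nonneg (Real.rpow_nonneg j.cast_nonneg s) (nint_nonneg _)) h
  obtain ⟨N, hN⟩ := eventually_atTop.1 hev
  obtain ⟨j₀, hj₀, hmin⟩ := (Finset.Icc 1 (N + 1)).exists_min_image g
    ⟨1, Finset.mem_Icc.2 ⟨le_rfl, by omega⟩⟩
  refine ⟨min c (g j₀), lt_min hc (hg j₀ (Finset.mem_Icc.1 hj₀).1), fun j hj => ?_⟩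
  have hle : min c (g j₀) ≤ g j := by
    rcases le_or_gt N j with hNj | hjN
    · exact (min_le_left _ _).trans (hN j hNj)
    · exact (min_le_right _ _).trans (hmin j (Finset.mem_Icc.2 ⟨hj, by omega⟩))
  have hj : (0 : ℝ) < (j : ℝ) ^ s := Real.rpow_pos_of_pos (by exact_mod_cast hj) s
  rwa [Real.rpow_neg (Nat.cast_nonneg j), ← div_eq_mul_inv, div_le_iff₀ hj, mul_comm]

theorem liminf_ne_zero_of_irrExp_lt {θ s : ℝ} (hs : 0 < s) (h : irrExp θ < s) :
    atTop.liminf (fun j : ℕ => (j : ℝ) ^ s * nint (j * θ)) ≠ 0 :=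
  fun h0 => h.not_ge (le_sSup ⟨s, rfl, hs, h0⟩)

theorem EReal.exists_gt_of_coe_mul_lt_one {τ : ℝ} (hτ : 0 < τ) {w : EReal}
    (h : (τ : EReal) * w < 1) : ∃ s : ℝ, 0 < s ∧ τ * s < 1 ∧ w < s := by
  suffices ∃ x : ℝ, w ≤ x ∧ 0 ≤ x ∧ x < 1 / τ by
    obtain ⟨x, hwx, hx, hxτ⟩ := this
    obtain ⟨s, hxs, hsτ⟩ := exists_between hxτ
    exact ⟨s, hx.trans_lt hxs, by rwa [lt_div_iff₀ hτ, mul_comm] at hsτ,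
      hwx.trans_lt (EReal.coe_lt_coe_iff.2 hxs)⟩
  induction w with
  | bot => exact ⟨0, bot_le, le_rfl, by positivity⟩
  | top => exact absurd h (by simp [EReal.coe_mul_top_of_pos hτ])
  | coe x =>
    refine ⟨max x 0, EReal.coe_le_coe_iff.2 (le_max_left _ _), le_max_right _ _,
      max_lt ?_ (by positivity)⟩
    rw [lt_div_iff₀ hτ, mul_comm]
    exact_mod_cast h

theorem eventually_two_div_lt_mul_rpow {c r : ℝ} (hc : 0 < c) (hr : r < 1) :
    ∀ᶠ Q : ℕ in atTop, 2 / (Q : ℝ) < c * (Q : ℝ) ^ (-r) := by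
  have hlim : Tendsto (fun Q : ℕ => (Q : ℝ) ^ (-(1 - r))) atTop (nhds 0) :=
    (tendsto_rpow_neg_atTop (by linarith)).comp tendsto_natCast_atTop_atTop
  filter_upwards [hlim.eventually (gt_mem_nhds (half_pos hc)), eventually_gt_atTop 0]
    with Q hQ hQ0
  have hQ0 : (0 : ℝ) < Q := by exact_mod_cast hQ0
  have hsplit : (Q : ℝ)⁻¹ = (Q : ℝ) ^ (-(1 - r)) * (Q : ℝ) ^ (-r) := by
    rw [← Real.rpow_add hQ0, ← Real.rpow_neg_one]
    ring_nf
  rw [div_eq_mul_inv, hsplit, ← mul_assoc]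
  exact mul_lt_mul_of_pos_right (by linarith) (Real.rpow_pos_of_pos hQ0 _)

theorem rpow_lt_of_mul_rpow_neg_le {s c τ x Q q : ℝ} (hs : 0 ≤ s) (hc : 0 < c) (hQ : 0 < Q)
    (hq : 0 < q) (hle : c * q ^ (-s) ≤ x) (hlt : x < c * Q ^ (-(τ * s))) : Q ^ τ < q := by
  by_contra! hqQ
  have hpow : Q ^ (-(τ * s)) ≤ q ^ (-s) := by
    rw [neg_mul_eq_mul_neg, Real.rpow_mul hQ.le]
    exact Real.rpow_le_rpow_of_nonpos hq hqQ (neg_nonpos.2 hs)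
  linarith [mul_le_mul_of_nonneg_left hpow hc.le]

theorem eventually_exists_dist_coe_mul_lt {θ s c τ : ℝ} (hs : 0 < s) (hc : 0 < c)
    (hdio : ∀ j : ℕ, 1 ≤ j → c * (j : ℝ) ^ (-s) ≤ nint (j * θ)) (hτ : 0 < τ) (hτs : τ * s < 1)
    (y : AddCircle (1 : ℝ)) :
    ∀ᶠ Q : ℕ in atTop, ∃ n : ℕ, 1 ≤ n ∧ n ≤ Q ∧
      dist (((n : ℝ) * θ : ℝ) : AddCircle (1 : ℝ)) y < (Q : ℝ) ^ (-τ) := by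
  filter_upwards [eventually_two_div_lt_mul_rpow hc hτs, eventually_ge_atTop 2] with Q hQ hQ2
  have hQ0 : (0 : ℝ) < Q := by positivity
  obtain ⟨q, hqN, hqmin, hqQ⟩ := exists_best_approx θ (N := Q / 2) (by omega)
  obtain ⟨hq1, hqQ2⟩ := Finset.mem_Icc.1 hqN
  have hq0 : (0 : ℝ) < q := by exact_mod_cast hq1
  have hhalf : 1 / (((Q / 2 : ℕ) : ℝ) + 1) < 2 / Q := by
    rw [div_lt_div_iff₀ (by positivity) hQ0, one_mul]
    exact_mod_cast (by omega : Q < 2 * (Q / 2 + 1))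
  have hQq : (Q : ℝ) ^ τ < q :=
    rpow_lt_of_mul_rpow_neg_le hs.le hc hQ0 hq0 (hdio q hq1) (hqQ.trans_lt (hhalf.trans hQ))
  have hq2 : 2 ≤ q := by
    have hQτ : 1 ≤ (Q : ℝ) ^ τ := Real.one_le_rpow (by exact_mod_cast hQ2.trans' one_le_two) hτ.le
    exact_mod_cast hQτ.trans_lt hQq
  obtain ⟨a, haq, hamin, haq'⟩ := exists_best_approx θ (N := q - 1) (by omega)
  obtain ⟨ha1, haq1⟩ := Finset.mem_Icc.1 haq
  have hqa : nint (q * θ) ≤ nint (a * θ) := hqmin a (Finset.mem_Icc.2 ⟨ha1, by omega⟩)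
  have hsign := mul_neg_of_best_approx haq hamin hqa
    ((mul_pos hc (Real.rpow_pos_of_pos hq0 _)).trans_le (hdio q hq1))
  obtain ⟨n, hn, hdist⟩ := exists_dist_coe_mul_le_of_mul_neg ha1 hq1 hsign le_rfl hqa y
  obtain ⟨hn1, hnaq⟩ := Finset.mem_Icc.1 hn
  refine ⟨n, hn1, by omega, hdist.trans_lt ?_⟩
  calc nint (a * θ) ≤ 1 / q := by
        rwa [Nat.cast_sub (by omega), Nat.cast_one, sub_add_cancel] at haq'
    _ < (Q : ℝ) ^ (-τ) := by
        rw [Real.rpow_neg hQ0.le, one_div]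
        exact inv_strictAnti₀ (Real.rpow_pos_of_pos hQ0 τ) hQq

theorem stmt_13 (θ : ℝ) (hθ : Irrational θ) (τ : ℝ) (hτ : 0 < τ)
    (h : (τ : EReal) * irrExp θ < 1) :
    Uset θ τ = Set.univ := by
  obtain ⟨s, hs, hτs, hθs⟩ := EReal.exists_gt_of_coe_mul_lt_one hτ h
  obtain ⟨c, hc, hdio⟩ := hθ.exists_pos_mul_rpow_neg_le_nint (liminf_ne_zero_of_irrExp_lt hs hθs)
  exact Set.eq_univ_of_forall (eventually_exists_dist_coe_mul_lt hs hc hdio hτ hτs)
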